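/- arXiv:2302.06273 — 2 statements merged into one kernel-verified Lean document; each statement's English description precedes it below -/
import Mathlib

section
/- Every small category C that admits all α-small (weighted) limits is Cauchy complete; consequently every absolute weight lies in the saturation of the class of α-small weights. -/
set_option linter.unusedVariables false

open CategoryTheory CategoryTheory.Limits Opposite

universe w w' v v' u

namespace Paper

/-! ### Weighted (co)limits in the `Set`-enriched case -/

/-- The canonical diagram whose conical colimit computes the `M`-weighted colimit of `H`. -/
abbrev elemDiagram {C : Type u} [SmallCategory C] (M : Cᵒᵖ ⥤ Type u)
    {A : Type w} [Category.{v} A] (H : C ⥤ A) : M.Elementsᵒᵖ ⥤ A :=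
  (CategoryOfElements.π M).leftOp ⋙ H

/-- The `M`-weighted colimit of `H`. -/
noncomputable abbrev wcolim {C : Type u} [SmallCategory C] (M : Cᵒᵖ ⥤ Type u)
    {A : Type w} [Category.{v} A] (H : C ⥤ A) [HasColimit (elemDiagram M H)] : A :=
  colimit (elemDiagram M H)

/-- The functor `M ⋆ (−) : [C, Set] ⥤ Set`. -/
noncomputable def wcolimF {C : Type u} [SmallCategory C] (M : Cᵒᵖ ⥤ Type u) :
    (C ⥤ Type u) ⥤ Type u :=
  (Functor.whiskeringLeft _ _ _).obj (CategoryOfElements.π M).leftOp ⋙ colim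

/-- The functor `(−) ⋆ F : [Bᵒᵖ, Set] ⥤ Set` for a covariant weight `F : B ⥤ Set`. -/
noncomputable def costarF {B : Type u} [SmallCategory B] (F : B ⥤ Type u) :
    (Bᵒᵖ ⥤ Type u) ⥤ Type u :=
  wcolimF (C := Bᵒᵖ) (unopUnop B ⋙ F)

/-! ### Cardinal-indexed smallness, filteredness, flatness, accessibility -/

/-- A small category `D` is `α`-small if it has fewer than `α` arrows. -/
def AlphaSmall (α : Cardinal.{u}) (D : Type u) [SmallCategory D] : Prop :=
  Cardinal.mk (Arrow D) < α

/-- `α`-filteredness: every `α`-small diagram admits a cocone. -/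
def IsAlphaFiltered (α : Cardinal.{u}) (D : Type w) [Category.{v} D] : Prop :=
  ∀ (S : Type u) [iS : SmallCategory S], AlphaSmall α S → ∀ F : S ⥤ D, Nonempty (Cocone F)

/-- `F : B ⥤ Set` is `α`-flat if `(−) ⋆ F` preserves `α`-small limits. -/
def AlphaFlat (α : Cardinal.{u}) {B : Type u} [SmallCategory B] (F : B ⥤ Type u) : Prop :=
  ∀ (D : Type u) [iD : SmallCategory D], AlphaSmall α D →
    PreservesLimitsOfShape D (costarF F)

/-- An object `X` is `α`-presentable if its hom-functor preserves `α`-filtered colimits. -/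
def AlphaPresentable (α : Cardinal.{u}) {A : Type w} [Category.{v} A] (X : A) : Prop :=
  ∀ (D : Type u) [iD : SmallCategory D], IsAlphaFiltered α D →
    PreservesColimitsOfShape D (coyoneda.obj (op X))

/-- A category is `α`-accessible if it has `α`-filtered (= `α`-flat) colimits and is
equivalent to the category of `α`-flat set-valued functors on some small category. -/
def AlphaAccessible (α : Cardinal.{u}) (A : Type w) [Category.{v} A] : Prop :=
  (∀ (D : Type u) [iD : SmallCategory D], IsAlphaFiltered α D → HasColimitsOfShape D A) ∧
  ∃ B : Cat.{u, u}, Nonempty (A ≌ ObjectProperty.FullSubcategory (fun F : B ⥤ Type u => AlphaFlat α F))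

/-- A functor preserves `α`-flat colimits (in the ordinary case, `α`-filtered colimits). -/
def PreservesAlphaFlatColimits (α : Cardinal.{u}) {A : Type w} [Category.{v} A]
    {K : Type w'} [Category.{v'} K] (F : A ⥤ K) : Prop :=
  ∀ (D : Type u) [iD : SmallCategory D], IsAlphaFiltered α D →
    PreservesColimitsOfShape D F

/-- A functor is `α`-continuous: it preserves `α`-small limits. -/
def AlphaContinuous (α : Cardinal.{u}) {A : Type w} [Category.{v} A]
    {K : Type w'} [Category.{v'} K] (F : A ⥤ K) : Prop :=
  ∀ (D : Type u) [iD : SmallCategory D], AlphaSmall α D → PreservesLimitsOfShape D F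

/-! ### Classes of limits -/

/-- A class of limit shapes. -/
def ShapeClass : Type (u + 1) :=
  ∀ (D : Type u), SmallCategory D → Prop

/-- A category has `Ψ`-limits. -/
def PsiComplete (Psi : ShapeClass.{u}) (A : Type w) [Category.{v} A] : Prop :=
  ∀ (D : Type u) [iD : SmallCategory D], Psi D iD → HasLimitsOfShape D A

/-- A functor is `Ψ`-continuous. -/
def PsiContinuous (Psi : ShapeClass.{u}) {A : Type w} [Category.{v} A]
    {K : Type w'} [Category.{v'} K] (F : A ⥤ K) : Prop :=
  ∀ (D : Type u) [iD : SmallCategory D], Psi D iD → PreservesLimitsOfShape D F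

/-! ### Colimit types -/

/-- A colimit type assigns to each weight a replete full subcategory of diagrams. -/
def ColimitType : Type (u + 1) :=
  ∀ (C : Type u) (iC : SmallCategory C), (Cᵒᵖ ⥤ Type u) → Set (C ⥤ Type u)

/-- `(M, H)` is a diagram of type `𝖢` in the functor category `[B, Set]`. -/
def IsCDiagram (Ct : ColimitType.{u}) {C : Type u} [iC : SmallCategory C]
    (M : Cᵒᵖ ⥤ Type u) {B : Type w} [Category.{u} B] (H : C ⥤ (B ⥤ Type u)) : Prop :=
  ∀ b : B, H ⋙ (evaluation B (Type u)).obj b ∈ Ct C iC M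

/-- A subcategory of a functor category is closed under colimits of type `𝖢`. -/
def ClosedUnderC (Ct : ColimitType.{u}) {B : Type w} [Category.{u} B]
    (S : Set (B ⥤ Type u)) : Prop :=
  ∀ (C : Type u) [iC : SmallCategory C] (M : Cᵒᵖ ⥤ Type u) (H : C ⥤ (B ⥤ Type u)),
    IsCDiagram Ct M H → (∀ c : C, H.obj c ∈ S) → wcolim M H ∈ S

/-- The closure of a family of generators under colimits of type `𝖢` (and isomorphisms). -/
def CClosureIn (Ct : ColimitType.{u}) {B : Type w} [Category.{u} B]
    (gens : Set (B ⥤ Type u)) : Set (B ⥤ Type u) :=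
  ⋂₀ {S | gens ⊆ S ∧ (∀ X Y : B ⥤ Type u, Nonempty (X ≅ Y) → X ∈ S → Y ∈ S) ∧
      ClosedUnderC Ct S}

/-- `𝖢A`: the closure of the representables under `𝖢`-colimits inside presheaves on `A`. -/
def CClosure (Ct : ColimitType.{u}) (A : Type w) [Category.{u} A] :
    Set (Aᵒᵖ ⥤ Type u) :=
  CClosureIn Ct {X | ∃ a : A, Nonempty (X ≅ yoneda.obj a)}

/-- `𝖢(Aᵒᵖ)`: the closure of the corepresentables under `𝖢`-colimits in `[A, Set]`. -/
def CoCClosure (Ct : ColimitType.{u}) (A : Type w) [Category.{u} A] :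
    Set (A ⥤ Type u) :=
  CClosureIn Ct {X | ∃ a : A, Nonempty (X ≅ coyoneda.obj (op a))}

/-- The one-step completion `𝖢₁B` of `B` under `𝖢`-colimits of representables. -/
def COneStep (Ct : ColimitType.{u}) (B : Type w) [Category.{u} B] :
    Set (Bᵒᵖ ⥤ Type u) :=
  {X | (∃ b : B, Nonempty (X ≅ yoneda.obj b)) ∨
    ∃ (C : Cat.{u, u}) (M : (↑C)ᵒᵖ ⥤ Type u) (H : ↑C ⥤ (Bᵒᵖ ⥤ Type u)),
      IsCDiagram Ct M H ∧ (∀ c : ↑C, ∃ b : B, Nonempty (H.obj c ≅ yoneda.obj b)) ∧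
      Nonempty (X ≅ wcolim M H)}

/-- The category `𝖢B`. -/
abbrev CCat (Ct : ColimitType.{u}) (B : Type w) [Category.{u} B] :=
  ObjectProperty.FullSubcategory (fun X => X ∈ CClosure Ct B)

/-- The inclusion `B ⥤ 𝖢B` (corestricted Yoneda). -/
def yonedaC (Ct : ColimitType.{u}) (B : Type w) [Category.{u} B] : B ⥤ CCat Ct B :=
  ObjectProperty.lift _ yoneda (fun b S hS => hS.1 ⟨b, ⟨Iso.refl _⟩⟩)

/-- Compatibility of a colimit type with a class of limits. -/
def Compatible (Psi : ShapeClass.{u}) (Ct : ColimitType.{u}) : Prop :=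
  ∀ (C : Type u) [iC : SmallCategory C] (M : Cᵒᵖ ⥤ Type u), (Ct C iC M).Nonempty →
    ∀ (D : Type u) [iD : SmallCategory D], Psi D iD →
      ∀ S : D ⥤ (C ⥤ Type u), (∀ d : D, S.obj d ∈ Ct C iC M) →
        limit S ∈ Ct C iC M ∧
        Nonempty (IsLimit ((wcolimF M).mapCone (limit.cone S)))

/-- Condition (a): each `𝖢_M` is closed under `α`-flat (= `α`-filtered) colimits. -/
def ConditionA (α : Cardinal.{u}) (Ct : ColimitType.{u}) : Prop :=
  ∀ (C : Type u) [iC : SmallCategory C] (M : Cᵒᵖ ⥤ Type u)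
    (D : Type u) [iD : SmallCategory D], IsAlphaFiltered α D →
    ∀ H : D ⥤ (C ⥤ Type u), (∀ d : D, H.obj d ∈ Ct C iC M) →
      colimit H ∈ Ct C iC M

/-- `A(H−, a)` for `H : Cᵒᵖ ⥤ A`, as a covariant functor `C ⥤ Set`. -/
def homDiagram {C : Type u} [SmallCategory C] {A : Type w} [Category.{u} A]
    (H : Cᵒᵖ ⥤ A) (a : A) : C ⥤ Type u :=
  H.rightOp ⋙ yoneda.obj a

/-- Condition (b): every `Ψ`-continuous `α`-flat-colimit-preserving functor from an
`α`-accessible category with `Ψ`-limits to `Set` is a `𝖢`-colimit of representables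
at `α`-presentable objects. -/
def ConditionB (α : Cardinal.{u}) (Psi : ShapeClass.{u}) (Ct : ColimitType.{u}) : Prop :=
  ∀ (A : Type (u + 1)) [iA : Category.{u} A], AlphaAccessible α A → PsiComplete Psi A →
    ∀ F : A ⥤ Type u, PsiContinuous Psi F → PreservesAlphaFlatColimits α F →
      ∃ (C : Type u) (iC : SmallCategory C) (M : Cᵒᵖ ⥤ Type u) (H : Cᵒᵖ ⥤ A),
        (∀ c : Cᵒᵖ, AlphaPresentable α (H.obj c)) ∧
        (∀ a : A, homDiagram H a ∈ Ct C iC M) ∧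
        Nonempty (F ≅ wcolim M (H.rightOp ⋙ coyoneda))

/-! ### 𝖢-virtual limits -/

/-- The presheaf `{M, Y∘H} = [C,Set](M, B(−, H−))`. -/
@[simps] def virtLim {C : Type u} [SmallCategory C] {B : Type w} [Category.{u} B]
    (M : C ⥤ Type u) (H : C ⥤ B) : Bᵒᵖ ⥤ Type u where
  obj b := M ⟶ H ⋙ coyoneda.obj (op b.unop)
  map {b b'} f := TypeCat.ofHom fun τ => τ ≫ Functor.whiskerLeft H (coyoneda.map f.unop.op)

/-- An `α`-small covariant weight. -/
def AlphaSmallWeight (α : Cardinal.{u}) {C : Type u} [SmallCategory C]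
    (M : C ⥤ Type u) : Prop :=
  Cardinal.mk (Arrow C) < α ∧ ∀ c : C, Cardinal.mk (M.obj c) < α

/-- `B` is `𝖢`-virtually `α`-complete. -/
def CVirtuallyAlphaComplete (Ct : ColimitType.{u}) (α : Cardinal.{u})
    (B : Type w) [Category.{u} B] : Prop :=
  ∀ (C : Type u) [iC : SmallCategory C] (M : C ⥤ Type u) (H : C ⥤ B),
    AlphaSmallWeight α M → virtLim M H ∈ CClosure Ct B

/-- `F : B ⥤ Set` is `𝖢`-virtually `α`-continuous. -/
def CVirtuallyAlphaContinuous (Ct : ColimitType.{u}) (α : Cardinal.{u})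
    {B : Type u} [SmallCategory B] (F : B ⥤ Type u) : Prop :=
  ∀ (C : Type u) [iC : SmallCategory C] (M : C ⥤ Type u) (H : C ⥤ B),
    AlphaSmallWeight α M → virtLim M H ∈ CClosure Ct B →
      Nonempty ((costarF F).obj (virtLim M H) ≃ (M ⟶ H ⋙ F))

/-! ### Diagrams of type 𝖢 in `𝖢B`, 𝖢-cocontinuity, 𝖢-presentability -/

/-- A diagram of type `𝖢` in the category `𝖢B`. -/
def IsCDiagramC (Ct : ColimitType.{u}) {C : Type u} [iC : SmallCategory C]
    (M : Cᵒᵖ ⥤ Type u) {B : Type w} [Category.{u} B] (H : C ⥤ CCat Ct B) : Prop :=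
  IsCDiagram Ct M (H ⋙ ObjectProperty.ι _)

/-- A set-valued functor on `𝖢B` is `𝖢`-cocontinuous: it preserves diagrams of type `𝖢`
as well as their colimits. -/
def CCocontinuousTo (Ct : ColimitType.{u}) {B : Type w} [Category.{u} B]
    (F : CCat Ct B ⥤ Type u) : Prop :=
  ∀ (C : Type u) [iC : SmallCategory C] (M : Cᵒᵖ ⥤ Type u) (H : C ⥤ CCat Ct B),
    IsCDiagramC Ct M H →
      (H ⋙ F) ∈ Ct C iC M ∧
      ∀ c : Cocone (elemDiagram M H), IsColimit c → Nonempty (IsColimit (F.mapCocone c))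

/-- A set-valued functor on `𝖢B` preserves colimits of type `𝖢`
(but not necessarily the diagrams themselves). -/
def CColimPreserving (Ct : ColimitType.{u}) {B : Type w} [Category.{u} B]
    (F : CCat Ct B ⥤ Type u) : Prop :=
  ∀ (C : Type u) [iC : SmallCategory C] (M : Cᵒᵖ ⥤ Type u) (H : C ⥤ CCat Ct B),
    IsCDiagramC Ct M H →
      ∀ c : Cocone (elemDiagram M H), IsColimit c → Nonempty (IsColimit (F.mapCocone c))

/-! ### Regularity, pseudo equivalence relations, exactness -/

/-- A regular projective object. -/
def RegProjective {E : Type w} [Category.{v} E] (P : E) : Prop :=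
  ∀ ⦃X Y : E⦄ (e : X ⟶ Y), Nonempty (RegularEpi e) → ∀ g : P ⟶ Y, ∃ f : P ⟶ X, f ≫ e = g

/-- A pseudo equivalence relation: a pair factoring as a regular epi followed by the
kernel pair of a regular epi. -/
def IsPseudoEqRel {E : Type w} [Category.{v} E] {R P : E} (f g : R ⟶ P) : Prop :=
  ∃ (S : E) (q : R ⟶ S) (h k : S ⟶ P), Nonempty (RegularEpi q) ∧ f = q ≫ h ∧ g = q ≫ k ∧
    ∃ (Z : E) (m : P ⟶ Z), Nonempty (RegularEpi m) ∧ IsKernelPair m h k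

/-- `𝖱`-presentable objects: the hom-functor preserves coequalizers of
pseudo equivalence relations. -/
def RPresentable {E : Type w} [Category.{v} E] (X : E) : Prop :=
  ∀ {R P : E} (f g : R ⟶ P), IsPseudoEqRel f g →
    PreservesColimit (parallelPair f g) (coyoneda.obj (op X))

/-- Enough regular projectives. -/
def EnoughRegProjectives (E : Type w) [Category.{v} E] : Prop :=
  ∀ X : E, ∃ (P : E) (p : P ⟶ X), RegProjective P ∧ Nonempty (RegularEpi p)

/-- An equivalence relation: a jointly monic, reflexive, symmetric, transitive pair. -/
def IsEquivRelPair {E : Type w} [Category.{v} E] [HasFiniteLimits E]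
    {R X : E} (f g : R ⟶ X) : Prop :=
  Mono (prod.lift f g) ∧
  (∃ r : X ⟶ R, r ≫ f = 𝟙 X ∧ r ≫ g = 𝟙 X) ∧
  (∃ s : R ⟶ R, s ≫ f = g ∧ s ≫ g = f) ∧
  (∃ t : pullback g f ⟶ R,
    t ≫ f = pullback.fst g f ≫ f ∧ t ≫ g = pullback.snd g f ≫ g)

/-- Barr-exactness (for a finitely complete category with coequalizers of kernel pairs):
regular epis are stable under pullback and every equivalence relation is a kernel pair. -/
def BarrExact (E : Type w) [Category.{v} E] [HasFiniteLimits E] : Prop :=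
  (∀ {X Y Z : E} (e : X ⟶ Y) (g : Z ⟶ Y), Nonempty (RegularEpi e) →
    Nonempty (RegularEpi (pullback.snd e g))) ∧
  (∀ {R X : E} (f g : R ⟶ X), IsEquivRelPair f g →
    ∃ (Z : E) (m : X ⟶ Z), IsKernelPair m f g)

/-- The closure of the representables under coequalizers of pseudo equivalence relations. -/
def RClosure (B : Type w) [Category.{u} B] : Set (Bᵒᵖ ⥤ Type u) :=
  ⋂₀ {S | (∀ b : B, yoneda.obj b ∈ S) ∧
    (∀ X Y : Bᵒᵖ ⥤ Type u, Nonempty (X ≅ Y) → X ∈ S → Y ∈ S) ∧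
    ∀ (R P : Bᵒᵖ ⥤ Type u) (f g : R ⟶ P), IsPseudoEqRel f g → R ∈ S → P ∈ S →
      colimit (parallelPair f g) ∈ S}

/-- The restricted Yoneda embedding into presheaves on the regular projectives. -/
def restrictedYoneda (E : Type u) [SmallCategory E] :
    E ⥤ ((ObjectProperty.FullSubcategory (RegProjective (E := E)))ᵒᵖ ⥤ Type u) :=
  yoneda ⋙ (Functor.whiskeringLeft _ _ _).obj (ObjectProperty.ι _).op

/-! ### Free groupoid actions -/

/-- The equalizer of `f` and `g` exists and is an initial object. -/
def HasInitialEqualizer {E : Type w} [Category.{v} E] {X Y : E} (f g : X ⟶ Y) : Prop :=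
  ∃ c : Fork f g, Nonempty (IsLimit c) ∧ Nonempty (IsInitial c.pt)

/-- A free groupoid action. -/
def FreeAction {G : Type w} [Groupoid.{v} G] {E : Type w'} [Category.{v'} E]
    (H : G ⥤ E) : Prop :=
  ∀ ⦃x y : G⦄ (g h : x ⟶ y), g ≠ h → HasInitialEqualizer (H.map g) (H.map h)

/-- A weakly-free groupoid action. -/
def WeaklyFreeAction {G : Type w} [Groupoid.{v} G] {E : Type w'} [Category.{v'} E]
    (H : G ⥤ E) : Prop :=
  ∀ ⦃x y : G⦄ (g h : x ⟶ y), H.map g ≠ H.map h → HasInitialEqualizer (H.map g) (H.map h)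

/-- A weakly-free action by `ℤ`: an automorphism all of whose non-identity powers
are fixed-point-free. -/
def WeaklyFreeAut {E : Type w} [Category.{v} E] {X : E} (f : Aut X) : Prop :=
  ∀ n : ℤ, (f ^ n).hom ≠ 𝟙 X → HasInitialEqualizer (f ^ n).hom (𝟙 X)

/-! ### Topos-theoretic notions -/

/-- Lex cocontinuous functors. -/
def LexCocontPred {A : Type w} [Category.{v} A] {K : Type w'} [Category.{v'} K]
    (F : A ⥤ K) : Prop :=
  PreservesFiniteLimits F ∧
  ∀ (D : Type u) [iD : SmallCategory D], PreservesColimitsOfShape D F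

/-- Finitary functors: those preserving (small) filtered colimits. -/
def FinitaryPred {A : Type w} [Category.{v} A] {K : Type w'} [Category.{v'} K]
    (F : A ⥤ K) : Prop :=
  ∀ (D : Type u) [iD : SmallCategory D] [IsFiltered D], PreservesColimitsOfShape D F

/-- Possessing all small filtered colimits. -/
def HasFilteredColimitsP (A : Type w) [Category.{v} A] : Prop :=
  ∀ (D : Type u) [iD : SmallCategory D] [IsFiltered D], HasColimitsOfShape D A

/-- A left exact localization of a presheaf category. -/
def IsLexLocalization (X : Type w) [Category.{v} X] : Prop :=
  ∃ (C : Cat.{u, u}) (J : X ⥤ ((↑C)ᵒᵖ ⥤ Type u)) (L : ((↑C)ᵒᵖ ⥤ Type u) ⥤ X),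
    Nonempty (L ⊣ J) ∧ J.Full ∧ J.Faithful ∧ PreservesFiniteLimits L

/-- A Grothendieck topos: an accessible left exact localization of a presheaf category. -/
def IsGrothendieckTopos (X : Type w) [Category.{v} X] : Prop :=
  ∃ (C : Cat.{u, u}) (J : X ⥤ ((↑C)ᵒᵖ ⥤ Type u)) (L : ((↑C)ᵒᵖ ⥤ Type u) ⥤ X),
    Nonempty (L ⊣ J) ∧ J.Full ∧ J.Faithful ∧ PreservesFiniteLimits L ∧
    ∃ κ : Cardinal.{u}, PreservesAlphaFlatColimits κ J


/-!
Idempotents are split by equalizers: the splitting of `p : X ⟶ X` is the equalizer of `𝟙 X`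
and `p`. Equalizers are finite limits, and finite diagrams are `α`-small as soon as `α` is
infinite.
-/

lemma alphaSmall_of_finCategory {α : Cardinal.{u}} (hα : Cardinal.aleph0 ≤ α)
    (D : Type u) [SmallCategory D] [FinCategory D] : AlphaSmall α D :=
  (Cardinal.lt_aleph0_of_finite _).trans_le hα

lemma hasFiniteLimits_of_hasAlphaSmallLimits {α : Cardinal.{u}} (hα : Cardinal.aleph0 ≤ α)
    (C : Type u) [SmallCategory C]
    (h : ∀ (D : Type u) [SmallCategory D], AlphaSmall α D → HasLimitsOfShape D C) :
    HasFiniteLimits C :=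
  hasFiniteLimits_of_hasFiniteLimits_of_size.{u} C fun D _ _ =>
    h D (alphaSmall_of_finCategory hα D)

lemma isIdempotentComplete_of_hasEqualizers (C : Type*) [Category* C] [HasEqualizers C] :
    IsIdempotentComplete C :=
  (Idempotents.isIdempotentComplete_iff_hasEqualizer_of_id_and_idempotent C).2
    fun _ _ _ => inferInstance

/-- every small category with all `α`-small limits is Cauchy complete
(idempotents split); hence absolute colimits exist, i.e. every absolute weight lies in
the saturation of the class of `α`-small weights. -/
theorem statement10 (α : Cardinal.{u}) (hα : Cardinal.aleph0 ≤ α)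
    (C : Type u) [SmallCategory C]
    (h : ∀ (D : Type u) [iD : SmallCategory D], AlphaSmall α D → HasLimitsOfShape D C) :
    IsIdempotentComplete C := by
  have := hasFiniteLimits_of_hasAlphaSmallLimits hα C h
  exact isIdempotentComplete_of_hasEqualizers C

end Paper
end

section
/- In the 2-category Cat, an invertible 2-cell φ : π₁ ⇒ π₂ : C → D is an equivalence 2-relation if and only if it is an acyclic isokernel cell, i.e., the isokernel cell of some functor q : D → E which is a retract equivalence, with the identifier of φ equal to the equalizer of π₁ and π₂. -/
set_option linter.unusedVariables false

open CategoryTheory CategoryTheory.Limits Opposite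

universe w w' v v' u

namespace Paper

section Statement14

variable {C D : Type u} [Category.{u} C] [Category.{u} D]

/-- The functor `φ̄ : C ⥤ D^𝟚` associated to an invertible 2-cell `φ : P₁ ⇒ P₂`. -/
@[simps] def phiBar (P₁ P₂ : C ⥤ D) (φ : P₁ ≅ P₂) : C ⥤ Arrow D where
  obj c := Arrow.mk (φ.hom.app c)
  map {c c'} f := Arrow.homMk (u := P₁.map f) (v := P₂.map f) (φ.hom.naturality f)

/-- `φ` is a 2-relation: `φ̄` is injective on objects and fully faithful. -/
def Is2Relation (P₁ P₂ : C ⥤ D) (φ : P₁ ≅ P₂) : Prop :=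
  Function.Injective (phiBar P₁ P₂ φ).obj ∧
  (phiBar P₁ P₂ φ).Full ∧ (phiBar P₁ P₂ φ).Faithful

/-- Reflexivity of the 2-relation `φ`. -/
def IsReflexive2 (P₁ P₂ : C ⥤ D) (φ : P₁ ≅ P₂) : Prop :=
  ∃ (r : D ⥤ C) (h₁ : r ⋙ P₁ = 𝟭 D) (h₂ : r ⋙ P₂ = 𝟭 D),
    ∀ d : D, φ.hom.app (r.obj d) =
      eqToHom ((congrArg (fun F : D ⥤ D => F.obj d) h₁).trans
        (congrArg (fun F : D ⥤ D => F.obj d) h₂).symm)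

/-- Symmetry of the 2-relation `φ`. -/
def IsSymmetric2 (P₁ P₂ : C ⥤ D) (φ : P₁ ≅ P₂) : Prop :=
  ∃ (s : C ⥤ C) (h₁ : s ⋙ P₁ = P₂) (h₂ : s ⋙ P₂ = P₁),
    ∀ c : C, φ.hom.app (s.obj c) =
      eqToHom (congrArg (fun F : C ⥤ D => F.obj c) h₁) ≫ φ.inv.app c ≫
        eqToHom (congrArg (fun F : C ⥤ D => F.obj c) h₂).symm

/-- The strict pullback `C ×_D C` of `P₂` along `P₁`. -/
def PB (P₁ P₂ : C ⥤ D) : Type u := {p : C × C // P₂.obj p.1 = P₁.obj p.2}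

instance (P₁ P₂ : C ⥤ D) : Category.{u} (PB P₁ P₂) where
  Hom p q := {f : (p.1.1 ⟶ q.1.1) × (p.1.2 ⟶ q.1.2) //
    P₂.map f.1 = eqToHom p.2 ≫ P₁.map f.2 ≫ eqToHom q.2.symm}
  id p := ⟨(𝟙 _, 𝟙 _), by simp⟩
  comp {p q r} f g := ⟨(f.1.1 ≫ g.1.1, f.1.2 ≫ g.1.2), by
    simp [f.2, g.2]⟩
  id_comp f := by apply Subtype.ext; simp
  comp_id f := by apply Subtype.ext; simp
  assoc f g h := by apply Subtype.ext; simp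

/-- First projection of the strict pullback. -/
@[simps] def rho₁ (P₁ P₂ : C ⥤ D) : PB P₁ P₂ ⥤ C where
  obj p := p.1.1
  map f := f.1.1
  map_id _ := rfl
  map_comp _ _ := rfl

/-- Second projection of the strict pullback. -/
@[simps] def rho₂ (P₁ P₂ : C ⥤ D) : PB P₁ P₂ ⥤ C where
  obj p := p.1.2
  map f := f.1.2
  map_id _ := rfl
  map_comp _ _ := rfl

/-- Transitivity of the 2-relation `φ`. -/
def IsTransitive2 (P₁ P₂ : C ⥤ D) (φ : P₁ ≅ P₂) : Prop :=
  ∃ (t : PB P₁ P₂ ⥤ C) (h₁ : t ⋙ P₁ = rho₁ P₁ P₂ ⋙ P₁)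
    (h₂ : t ⋙ P₂ = rho₂ P₁ P₂ ⋙ P₂),
    ∀ p : PB P₁ P₂, φ.hom.app (t.obj p) =
      eqToHom (congrArg (fun F : PB P₁ P₂ ⥤ D => F.obj p) h₁) ≫
        φ.hom.app p.1.1 ≫ eqToHom p.2 ≫ φ.hom.app p.1.2 ≫
        eqToHom (congrArg (fun F : PB P₁ P₂ ⥤ D => F.obj p) h₂).symm

/-- Acyclicity: the identifier of `φ` agrees with the equalizer of `π₁` and `π₂`. -/
def IsAcyclic2 (P₁ P₂ : C ⥤ D) (φ : P₁ ≅ P₂) : Prop :=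
  ∀ (c : C) (h : P₁.obj c = P₂.obj c), φ.hom.app c = eqToHom h

/-- An equivalence 2-relation. -/
def IsEquiv2Relation (P₁ P₂ : C ⥤ D) (φ : P₁ ≅ P₂) : Prop :=
  Is2Relation P₁ P₂ φ ∧ IsReflexive2 P₁ P₂ φ ∧ IsSymmetric2 P₁ P₂ φ ∧
    IsTransitive2 P₁ P₂ φ ∧ IsAcyclic2 P₁ P₂ φ

/-- A 2-cell is inverted to an identity by `q`. -/
def InvertedBy {E : Type u} [Category.{u} E] (q : D ⥤ E)
    {X : Type u} [Category.{u} X] {R₁ R₂ : X ⥤ D} (ψ : R₁ ≅ R₂) : Prop :=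
  ∃ h : R₁ ⋙ q = R₂ ⋙ q,
    ∀ x : X, q.map (ψ.hom.app x) = eqToHom (congrArg (fun F : X ⥤ E => F.obj x) h)

/-- `φ` is the isokernel cell of `q` : it is inverted to an identity by `q` and is
universal with that property. -/
def IsIsokernelCell {E : Type u} [Category.{u} E] (q : D ⥤ E)
    (P₁ P₂ : C ⥤ D) (φ : P₁ ≅ P₂) : Prop :=
  InvertedBy q φ ∧
  ∀ (X : Cat.{u, u}) (R₁ R₂ : ↑X ⥤ D) (ψ : R₁ ≅ R₂), InvertedBy q ψ →
    ∃! u : ↑X ⥤ C,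
      ∃ (h₁ : u ⋙ P₁ = R₁) (h₂ : u ⋙ P₂ = R₂),
        ∀ x : ↑X, φ.hom.app (u.obj x) =
          eqToHom (congrArg (fun F : ↑X ⥤ D => F.obj x) h₁) ≫ ψ.hom.app x ≫
            eqToHom (congrArg (fun F : ↑X ⥤ D => F.obj x) h₂).symm

/-- A retract equivalence. -/
def IsRetractEquiv {E : Type u} [Category.{u} E] (q : D ⥤ E) : Prop :=
  ∃ s : E ⥤ D, s ⋙ q = 𝟭 E ∧ Nonempty (q ⋙ s ≅ 𝟭 D)

/-!
In `Cat` the isokernel of `q : D ⥤ E` is computed by the full subcategory of `D^𝟚` on the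
isomorphisms that `q` sends to identities, and `φ` is the isokernel cell of `q` exactly when `φ̄`
corestricts to an isomorphism of categories onto it. So an isokernel cell is a 2-relation, and
reflexivity, symmetry and transitivity come from the universal property applied to the identity
cell of `D`, to `φ⁻¹` and to the composite cell on `C ×_D C`.

Conversely, the components of an equivalence 2-relation `φ` form a wide subgroupoid `W` of `D`
which acyclicity makes thin: a `W`-endomorphism is an identity, so there is at most one
`W`-morphism between two objects. Collapsing every component of `W` onto a chosen representative
gives a retract equivalence `q` which sends a morphism to an identity exactly when it lies in `W`,
so the isokernel of `q` is the image of `φ̄` and `φ` is its isokernel cell.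
-/

theorem eq_of_comp_eq_comp {X : Type*} {A : Type*} {B : Type*} [Category X] [Category A]
    [Category B] {F G : X ⥤ A} (H : A ⥤ B) [H.Faithful] (hH : Function.Injective H.obj)
    (h : F ⋙ H = G ⋙ H) : F = G :=
  CategoryTheory.Functor.ext (fun x => hH (Functor.congr_obj h x)) fun _ _ f =>
    H.map_injective (by simpa [eqToHom_map] using Functor.congr_hom h f)

section StrictInverse

variable {A : Type u} {B : Type v} [Category.{w} A] [Category.{w'} B] (J : A ⥤ B)

noncomputable def strictInverse (hJ : Function.Bijective J.obj) [J.Full] [J.Faithful] :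
    B ⥤ A where
  obj := Function.surjInv hJ.2
  map {k k'} g := J.preimage (eqToHom (Function.surjInv_eq hJ.2 k) ≫ g ≫
    eqToHom (Function.surjInv_eq hJ.2 k').symm)
  map_id _ := J.map_injective (by simp)
  map_comp _ _ := J.map_injective (by simp)

theorem comp_strictInverse (hJ : Function.Bijective J.obj) [J.Full] [J.Faithful] :
    J ⋙ strictInverse J hJ = 𝟭 A := by
  have hobj : ∀ c, (J ⋙ strictInverse J hJ).obj c = c := Function.leftInverse_surjInv hJ
  refine CategoryTheory.Functor.ext hobj fun _ _ _ => J.map_injective ?_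
  rw [Functor.map_comp, Functor.map_comp, eqToHom_map, eqToHom_map]
  simp [strictInverse]

theorem strictInverse_comp (hJ : Function.Bijective J.obj) [J.Full] [J.Faithful] :
    strictInverse J hJ ⋙ J = 𝟭 B :=
  CategoryTheory.Functor.ext (fun k => Function.surjInv_eq hJ.2 k) fun _ _ _ => by
    simp [strictInverse]

theorem bijective_full_faithful_iff_exists_inverse :
    (Function.Bijective J.obj ∧ J.Full ∧ J.Faithful) ↔
      ∃ v : B ⥤ A, J ⋙ v = 𝟭 A ∧ v ⋙ J = 𝟭 B := by
  constructor
  · rintro ⟨hJ, _, _⟩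
    exact ⟨strictInverse J hJ, comp_strictInverse J hJ, strictInverse_comp J hJ⟩
  · rintro ⟨v, hJv, hvJ⟩
    let e : A ≌ B := ⟨J, v, eqToIso hJv.symm, eqToIso hvJ, by simp [eqToHom_map]⟩
    refine ⟨⟨fun c c' h => ?_, fun k => ⟨v.obj k, Functor.congr_obj hvJ k⟩⟩,
      e.full_functor, e.faithful_functor⟩
    simpa using (Functor.congr_obj hJv c).symm.trans
      ((congrArg v.obj h).trans (Functor.congr_obj hJv c'))

end StrictInverse

theorem forall_existsUnique_comp_eq_iff {A B : Type u} [Category.{u} A] [Category.{u} B]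
    (J : A ⥤ B) :
    (∀ (X : Cat.{u, u}) (G : ↑X ⥤ B), ∃! L : ↑X ⥤ A, L ⋙ J = G) ↔
      ∃ v : B ⥤ A, J ⋙ v = 𝟭 A ∧ v ⋙ J = 𝟭 B := by
  constructor
  · intro h
    obtain ⟨v, hvJ, -⟩ := h (Cat.of B) (𝟭 B)
    obtain ⟨_, -, hJ⟩ := h (Cat.of A) J
    exact ⟨v, (hJ (J ⋙ v) (congrArg (J ⋙ ·) hvJ)).trans (hJ (𝟭 A) rfl).symm, hvJ⟩
  · rintro ⟨v, hJv, hvJ⟩ X G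
    refine ⟨G ⋙ v, congrArg (G ⋙ ·) hvJ, fun L hL => ?_⟩
    rw [← hL]
    exact (congrArg (L ⋙ ·) hJv).symm

section Isokernel

variable {E : Type u} [Category.{u} E] (q : D ⥤ E)

def IsoInvertedBy : ObjectProperty (Arrow D) :=
  fun a => IsIso a.hom ∧ ∃ h : q.obj a.left = q.obj a.right, q.map a.hom = eqToHom h

abbrev Isokernel : Type u := (IsoInvertedBy q).FullSubcategory

theorem invertedBy_iff {X : Type u} [Category.{u} X] {R₁ R₂ : X ⥤ D} (ψ : R₁ ≅ R₂) :
    InvertedBy q ψ ↔ ∀ x, ∃ h, q.map (ψ.hom.app x) = eqToHom h := by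
  refine ⟨fun ⟨_, hψ⟩ x => ⟨_, hψ x⟩, fun hψ => ⟨?_, fun x => ?_⟩⟩
  · refine CategoryTheory.Functor.ext (fun x => (hψ x).1) fun x y f => ?_
    have := q.congr_map (ψ.hom.naturality f)
    simp only [Functor.map_comp, (hψ x).2, (hψ y).2, comp_eqToHom_iff] at this
    simpa using this
  · exact (hψ x).2

abbrev isokernelLift {X : Type u} [Category.{u} X] {R₁ R₂ : X ⥤ D} (ψ : R₁ ≅ R₂)
    (hψ : InvertedBy q ψ) : X ⥤ Isokernel q :=
  (IsoInvertedBy q).lift (phiBar R₁ R₂ ψ) fun x =>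
    ⟨show IsIso (ψ.hom.app x) from inferInstance, (invertedBy_iff q ψ).1 hψ x⟩

noncomputable def isokernelCell :
    (IsoInvertedBy q).ι ⋙ Arrow.leftFunc ≅ (IsoInvertedBy q).ι ⋙ Arrow.rightFunc :=
  NatIso.ofComponents (fun a => @asIso _ _ _ _ a.obj.hom a.property.1) fun f => f.hom.w

theorem isokernelLift_isoWhiskerLeft {X : Type u} [Category.{u} X] (G : X ⥤ Isokernel q)
    (hG : InvertedBy q (Functor.isoWhiskerLeft G (isokernelCell q))) :
    isokernelLift q (Functor.isoWhiskerLeft G (isokernelCell q)) hG = G :=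
  rfl

theorem comp_phiBar_eq_iff {X : Type u} [Category.{u} X] {P₁ P₂ : C ⥤ D} (φ : P₁ ≅ P₂)
    {R₁ R₂ : X ⥤ D} (ψ : R₁ ≅ R₂) (L : X ⥤ C) :
    L ⋙ phiBar P₁ P₂ φ = phiBar R₁ R₂ ψ ↔
      ∃ (h₁ : L ⋙ P₁ = R₁) (h₂ : L ⋙ P₂ = R₂), ∀ x, φ.hom.app (L.obj x) =
        eqToHom (congrArg (fun F : X ⥤ D => F.obj x) h₁) ≫ ψ.hom.app x ≫
          eqToHom (congrArg (fun F : X ⥤ D => F.obj x) h₂).symm := by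
  constructor
  · intro h
    exact ⟨congrArg (· ⋙ Arrow.leftFunc) h, congrArg (· ⋙ Arrow.rightFunc) h, fun x =>
      ((Arrow.mk_eq_mk_iff _ _).1 (Functor.congr_obj h x)).2.2⟩
  · rintro ⟨h₁, h₂, h⟩
    have hobj : ∀ x, (L ⋙ phiBar P₁ P₂ φ).obj x = (phiBar R₁ R₂ ψ).obj x := fun x =>
      (Arrow.mk_eq_mk_iff _ _).2 ⟨Functor.congr_obj h₁ x, Functor.congr_obj h₂ x, h x⟩
    refine CategoryTheory.Functor.ext hobj fun x y f => ?_
    apply Arrow.hom_ext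
    · rw [Arrow.comp_left, Arrow.comp_left]
      simp only [Arrow.eqToHom_left, Functor.comp_map, phiBar_map, Arrow.homMk_left]
      exact Functor.congr_hom h₁ f
    · rw [Arrow.comp_right, Arrow.comp_right]
      simp only [Arrow.eqToHom_right, Functor.comp_map, phiBar_map, Arrow.homMk_right]
      exact Functor.congr_hom h₂ f

theorem comp_isokernelLift_eq_iff {X : Type u} [Category.{u} X] {P₁ P₂ : C ⥤ D} {φ : P₁ ≅ P₂}
    {R₁ R₂ : X ⥤ D} {ψ : R₁ ≅ R₂} (hφ : InvertedBy q φ) (hψ : InvertedBy q ψ) (L : X ⥤ C) :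
    L ⋙ isokernelLift q φ hφ = isokernelLift q ψ hψ ↔
      L ⋙ phiBar P₁ P₂ φ = phiBar R₁ R₂ ψ :=
  ⟨congrArg (· ⋙ (IsoInvertedBy q).ι),
    fun h => eq_of_comp_eq_comp (IsoInvertedBy q).ι
      (fun _ _ => ObjectProperty.FullSubcategory.ext) h⟩

theorem isIsokernelCell_iff (P₁ P₂ : C ⥤ D) (φ : P₁ ≅ P₂) :
    IsIsokernelCell q P₁ P₂ φ ↔ ∃ hφ : InvertedBy q φ,
      ∀ (X : Cat.{u, u}) (G : ↑X ⥤ Isokernel q), ∃! L : ↑X ⥤ C, L ⋙ isokernelLift q φ hφ = G := by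
  refine ⟨fun ⟨hφ, h⟩ => ⟨hφ, fun X G => ?_⟩, fun ⟨hφ, h⟩ => ⟨hφ, fun X R₁ R₂ ψ hψ => ?_⟩⟩
  · have hψ : InvertedBy q (Functor.isoWhiskerLeft G (isokernelCell q)) :=
      (invertedBy_iff q _).2 fun x => (G.obj x).property.2
    refine (existsUnique_congr fun L => ?_).1 (h X _ _ _ hψ)
    rw [← comp_phiBar_eq_iff, ← comp_isokernelLift_eq_iff q hφ hψ,
      isokernelLift_isoWhiskerLeft]
  · refine (existsUnique_congr fun L => ?_).1 (h X (isokernelLift q ψ hψ))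
    rw [comp_isokernelLift_eq_iff, comp_phiBar_eq_iff]

theorem isIsokernelCell_iff_bijective (P₁ P₂ : C ⥤ D) (φ : P₁ ≅ P₂) :
    IsIsokernelCell q P₁ P₂ φ ↔ ∃ hφ : InvertedBy q φ,
      Function.Bijective (isokernelLift q φ hφ).obj ∧
        (isokernelLift q φ hφ).Full ∧ (isokernelLift q φ hφ).Faithful := by
  simp only [isIsokernelCell_iff, forall_existsUnique_comp_eq_iff,
    bijective_full_faithful_iff_exists_inverse]

end Isokernel

section ThinQuotient

theorem InducedCategory.eqToHom_hom {A : Type*} {B : Type*} [Category B] {F : A → B}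
    {a a' : InducedCategory B F} (h : a = a') :
    (eqToHom h).hom = eqToHom (congrArg F h) := by
  subst h
  rfl

variable (W : MorphismProperty D)

structure IsThinGroupoid : Prop where
  id_mem (d : D) : W (𝟙 d)
  comp_mem {d d' d'' : D} (f : d ⟶ d') (g : d' ⟶ d'') : W f → W g → W (f ≫ g)
  exists_reverse {d d' : D} (f : d ⟶ d') : W f → ∃ g : d' ⟶ d, W g
  eq_id {d : D} (f : d ⟶ d) : W f → f = 𝟙 d

namespace IsThinGroupoid

variable {W}

theorem eq_of_mem (hW : IsThinGroupoid W) {d d' : D} {f g : d ⟶ d'} (hf : W f) (hg : W g) :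
    f = g := by
  obtain ⟨g', hg'⟩ := hW.exists_reverse g hg
  have hfg' := hW.eq_id _ (hW.comp_mem f g' hf hg')
  have hgg' := hW.eq_id _ (hW.comp_mem g g' hg hg')
  have hg'g := hW.eq_id _ (hW.comp_mem g' g hg' hg)
  calc f = (f ≫ g') ≫ g := by rw [Category.assoc, hg'g, Category.comp_id]
    _ = (g ≫ g') ≫ g := by rw [hfg', hgg']
    _ = g := by rw [Category.assoc, hg'g, Category.comp_id]

def setoid (hW : IsThinGroupoid W) : Setoid D where
  r d d' := ∃ f : d ⟶ d', W f
  iseqv := ⟨fun d => ⟨_, hW.id_mem d⟩, fun ⟨f, hf⟩ => hW.exists_reverse f hf,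
    fun ⟨f, hf⟩ ⟨g, hg⟩ => ⟨_, hW.comp_mem f g hf hg⟩⟩

noncomputable def link {hW : IsThinGroupoid W} {d d' : D} (h : hW.setoid d d') : d ⟶ d' :=
  h.choose

theorem link_mem {hW : IsThinGroupoid W} {d d' : D} (h : hW.setoid d d') : W (link h) :=
  h.choose_spec

theorem link_eq (hW : IsThinGroupoid W) {d d' : D} (h : hW.setoid d d') {f : d ⟶ d'}
    (hf : W f) : link h = f :=
  hW.eq_of_mem (link_mem h) hf

theorem link_comp (hW : IsThinGroupoid W) {d d' d'' : D} (h : hW.setoid d d')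
    (h' : hW.setoid d' d'') (h'' : hW.setoid d d'') : link h ≫ link h' = link h'' :=
  (hW.link_eq h'' (hW.comp_mem _ _ (link_mem h) (link_mem h'))).symm

theorem link_eqToHom (hW : IsThinGroupoid W) {d d' : D} (h : hW.setoid d d') (e : d = d') :
    link h = eqToHom e := by
  subst e
  exact hW.link_eq h (hW.id_mem d)

theorem link_comp_link_self (hW : IsThinGroupoid W) {d d' : D} (h : hW.setoid d d')
    (h' : hW.setoid d' d) : link h ≫ link h' = 𝟙 d := by
  rw [hW.link_comp h h' (hW.setoid.refl d), hW.link_eqToHom _ rfl, eqToHom_refl]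

theorem link_comp_link_self_assoc (hW : IsThinGroupoid W) {d d' e : D} (h : hW.setoid d d')
    (h' : hW.setoid d' d) (g : d ⟶ e) : link h ≫ link h' ≫ g = g := by
  rw [← Category.assoc, hW.link_comp_link_self, Category.id_comp]

/-- A component of `W` is represented by the object `Quotient.out` chooses in it. -/
abbrev QuotientCategory (hW : IsThinGroupoid W) : Type u :=
  InducedCategory D (Quotient.out : Quotient hW.setoid → D)

noncomputable def quotientFunctor (hW : IsThinGroupoid W) : D ⥤ hW.QuotientCategory where
  obj d := (Quotient.mk hW.setoid d : Quotient hW.setoid)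
  map {d d'} f := InducedCategory.homMk
    (link (Quotient.mk_out d) ≫ f ≫ link (hW.setoid.symm (Quotient.mk_out d')))
  map_id d := InducedCategory.hom_ext <| by
    change link _ ≫ 𝟙 d ≫ link _ = 𝟙 _
    rw [Category.id_comp, hW.link_comp_link_self]
  map_comp {d d' d''} f g := InducedCategory.hom_ext <| by
    change link _ ≫ (f ≫ g) ≫ link _ = (link _ ≫ f ≫ link _) ≫ (link _ ≫ g ≫ link _)
    simp only [Category.assoc]
    rw [← Category.assoc (link _) (link _), hW.link_comp_link_self, Category.id_comp]

noncomputable def sectionFunctor (hW : IsThinGroupoid W) : hW.QuotientCategory ⥤ D :=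
  inducedFunctor _

theorem sectionFunctor_comp_quotientFunctor (hW : IsThinGroupoid W) :
    hW.sectionFunctor ⋙ hW.quotientFunctor = 𝟭 _ := by
  have hobj : ∀ x, (hW.sectionFunctor ⋙ hW.quotientFunctor).obj x = x := Quotient.out_eq
  refine CategoryTheory.Functor.ext hobj fun x y f => InducedCategory.hom_ext ?_
  change link _ ≫ f.hom ≫ link _ = (eqToHom (hobj x) ≫ f ≫ eqToHom (hobj y).symm).hom
  rw [InducedCategory.comp_hom, InducedCategory.comp_hom, InducedCategory.eqToHom_hom,
    InducedCategory.eqToHom_hom]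
  congr 1
  · exact hW.link_eqToHom _ _
  · congr 1
    exact hW.link_eqToHom _ _

noncomputable def quotientFunctorCompSectionFunctorIso (hW : IsThinGroupoid W) :
    hW.quotientFunctor ⋙ hW.sectionFunctor ≅ 𝟭 D :=
  NatIso.ofComponents
    (fun d => ⟨link (Quotient.mk_out d), link (hW.setoid.symm (Quotient.mk_out d)),
      hW.link_comp_link_self _ _, hW.link_comp_link_self _ _⟩)
    fun {d d'} f => by
      change (link (Quotient.mk_out d) ≫ f ≫ link (hW.setoid.symm (Quotient.mk_out d'))) ≫
        link (Quotient.mk_out d') = link (Quotient.mk_out d) ≫ f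
      rw [Category.assoc, Category.assoc, hW.link_comp_link_self, Category.comp_id]

theorem isRetractEquiv_quotientFunctor (hW : IsThinGroupoid W) :
    IsRetractEquiv hW.quotientFunctor :=
  ⟨hW.sectionFunctor, hW.sectionFunctor_comp_quotientFunctor,
    ⟨hW.quotientFunctorCompSectionFunctorIso⟩⟩

theorem quotientFunctor_map_eq_eqToHom_iff (hW : IsThinGroupoid W) {d d' : D} (f : d ⟶ d') :
    (∃ h, hW.quotientFunctor.map f = eqToHom h) ↔ W f := by
  have hd := Quotient.mk_out (s := hW.setoid) d
  have hd' := Quotient.mk_out (s := hW.setoid) d'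
  constructor
  · rintro ⟨h, hf⟩
    have hdd' : hW.setoid d d' := Quotient.exact h
    have hout : hW.setoid (⟦d⟧ : Quotient hW.setoid).out (⟦d'⟧ : Quotient hW.setoid).out :=
      hW.setoid.trans hd (hW.setoid.trans hdd' (hW.setoid.symm hd'))
    replace hf : link hd ≫ f ≫ link (hW.setoid.symm hd') = link hout :=
      ((congrArg InducedCategory.Hom.hom hf).trans (InducedCategory.eqToHom_hom h)).trans
        (hW.link_eqToHom hout _).symm
    have : f = link (hW.setoid.symm hd) ≫ link hout ≫ link hd' := by
      rw [← hf]
      simp only [Category.assoc, hW.link_comp_link_self_assoc, hW.link_comp_link_self,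
        Category.comp_id]
    rw [this]
    exact hW.comp_mem _ _ (link_mem _) (hW.comp_mem _ _ (link_mem _) (link_mem _))
  · intro hf
    have hdd' : hW.setoid d d' := ⟨f, hf⟩
    have h : hW.quotientFunctor.obj d = hW.quotientFunctor.obj d' := Quotient.sound hdd'
    refine ⟨h, InducedCategory.hom_ext ?_⟩
    change link hd ≫ f ≫ link (hW.setoid.symm hd') = (eqToHom h).hom
    rw [InducedCategory.eqToHom_hom, ← hW.link_eq hdd' hf,
      hW.link_comp hdd' _ (hW.setoid.trans hdd' (hW.setoid.symm hd'))]
    exact (hW.link_comp _ _ (hW.setoid.trans hd (hW.setoid.trans hdd' (hW.setoid.symm hd')))).trans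
      (hW.link_eqToHom _ _)

end IsThinGroupoid

end ThinQuotient

section Equiv2Relation

variable {P₁ P₂ : C ⥤ D} {φ : P₁ ≅ P₂}

theorem IsReflexive2.id_mem (h : IsReflexive2 P₁ P₂ φ) (d : D) :
    MorphismProperty.ofHoms φ.hom.app (𝟙 d) := by
  obtain ⟨r, h₁, h₂, hr⟩ := h
  exact (MorphismProperty.ofHoms φ.hom.app).of_eq (.mk (r.obj d)) (Functor.congr_obj h₁ d)
    (Functor.congr_obj h₂ d) (by simp [hr])

theorem IsSymmetric2.exists_reverse (h : IsSymmetric2 P₁ P₂ φ) {d d' : D} (f : d ⟶ d') :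
    MorphismProperty.ofHoms φ.hom.app f → ∃ g : d' ⟶ d, MorphismProperty.ofHoms φ.hom.app g := by
  rintro ⟨c⟩
  obtain ⟨s, h₁, h₂, hs⟩ := h
  exact ⟨φ.inv.app c, (MorphismProperty.ofHoms φ.hom.app).of_eq (.mk (s.obj c))
    (Functor.congr_obj h₁ c) (Functor.congr_obj h₂ c) (by simp [hs])⟩

theorem IsTransitive2.exists_app (h : IsTransitive2 P₁ P₂ φ) {c c' : C}
    (e : P₂.obj c = P₁.obj c') : ∃ (c'' : C) (h₁ : P₁.obj c'' = P₁.obj c)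
      (h₂ : P₂.obj c'' = P₂.obj c'), φ.hom.app c'' =
        eqToHom h₁ ≫ φ.hom.app c ≫ eqToHom e ≫ φ.hom.app c' ≫ eqToHom h₂.symm := by
  obtain ⟨t, h₁, h₂, ht⟩ := h
  exact ⟨t.obj ⟨(c, c'), e⟩, Functor.congr_obj h₁ _, Functor.congr_obj h₂ _, ht _⟩

theorem IsTransitive2.comp_mem (h : IsTransitive2 P₁ P₂ φ) {d d' d'' : D} (f : d ⟶ d')
    (g : d' ⟶ d'') : MorphismProperty.ofHoms φ.hom.app f → MorphismProperty.ofHoms φ.hom.app g →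
      MorphismProperty.ofHoms φ.hom.app (f ≫ g) := by
  rintro ⟨c⟩ hg
  obtain ⟨c', hc'⟩ := (MorphismProperty.ofHoms_iff _ _).1 hg
  obtain ⟨e, rfl, rfl⟩ := (Arrow.mk_eq_mk_iff _ _).1 hc'
  obtain ⟨c'', h₁, h₂, hc''⟩ := h.exists_app e
  exact (MorphismProperty.ofHoms φ.hom.app).of_eq (.mk c'') h₁ h₂ (by simp [hc''])

theorem IsAcyclic2.eq_id (h : IsAcyclic2 P₁ P₂ φ) {d : D} (f : d ⟶ d) :
    MorphismProperty.ofHoms φ.hom.app f → f = 𝟙 d := by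
  intro hf
  obtain ⟨c, hc⟩ := (MorphismProperty.ofHoms_iff _ _).1 hf
  obtain ⟨e, e', rfl⟩ := (Arrow.mk_eq_mk_iff _ _).1 hc
  simp [h c (e.symm.trans e')]

theorem IsEquiv2Relation.isThinGroupoid (h : IsEquiv2Relation P₁ P₂ φ) :
    IsThinGroupoid (MorphismProperty.ofHoms φ.hom.app) :=
  ⟨h.2.1.id_mem, h.2.2.2.1.comp_mem, h.2.2.1.exists_reverse, h.2.2.2.2.eq_id⟩

theorem IsEquiv2Relation.isIsokernelCell (h : IsEquiv2Relation P₁ P₂ φ) :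
    IsIsokernelCell h.isThinGroupoid.quotientFunctor P₁ P₂ φ := by
  have hW := h.isThinGroupoid
  have hφ : InvertedBy hW.quotientFunctor φ := (invertedBy_iff _ _).2 fun c =>
    (hW.quotientFunctor_map_eq_eqToHom_iff _).2 (.mk c)
  obtain ⟨⟨hinj, hfull, hfaithful⟩, -⟩ := h
  refine (isIsokernelCell_iff_bijective _ _ _ _).2 ⟨hφ, ⟨fun c c' hcc' => hinj
    (congrArg ObjectProperty.FullSubcategory.obj hcc'), fun a => ?_⟩,
    ObjectProperty.instFullFullSubcategoryLift _ _ _,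
    ObjectProperty.instFaithfulFullSubcategoryLift _ _ _⟩
  obtain ⟨c, hc⟩ := (MorphismProperty.ofHoms_iff _ _).1
    ((hW.quotientFunctor_map_eq_eqToHom_iff _).1 a.property.2)
  exact ⟨c, ObjectProperty.FullSubcategory.ext hc.symm⟩

end Equiv2Relation

section IsokernelCell

variable {E : Type u} [Category.{u} E] {q : D ⥤ E} {P₁ P₂ : C ⥤ D} {φ : P₁ ≅ P₂}

theorem InvertedBy.symm {X : Type u} [Category.{u} X] {R₁ R₂ : X ⥤ D} {ψ : R₁ ≅ R₂}
    (h : InvertedBy q ψ) : InvertedBy q ψ.symm := by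
  obtain ⟨hq, hψ⟩ := h
  refine ⟨hq.symm, fun x => ?_⟩
  calc q.map (ψ.inv.app x) = inv (q.map (ψ.hom.app x)) := by simp [← Functor.map_inv]
    _ = _ := by simp [hψ x]

theorem rho₁_comp_eq_rho₂_comp (P₁ P₂ : C ⥤ D) : rho₁ P₁ P₂ ⋙ P₂ = rho₂ P₁ P₂ ⋙ P₁ :=
  CategoryTheory.Functor.ext (fun p => p.2) fun _ _ f => f.2

def transitivityCell (φ : P₁ ≅ P₂) : rho₁ P₁ P₂ ⋙ P₁ ≅ rho₂ P₁ P₂ ⋙ P₂ :=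
  Functor.isoWhiskerLeft _ φ ≪≫ eqToIso (rho₁_comp_eq_rho₂_comp P₁ P₂) ≪≫
    Functor.isoWhiskerLeft _ φ

theorem transitivityCell_hom_app (φ : P₁ ≅ P₂) (p : PB P₁ P₂) :
    (transitivityCell φ).hom.app p = φ.hom.app ((rho₁ P₁ P₂).obj p) ≫
      eqToHom (Functor.congr_obj (rho₁_comp_eq_rho₂_comp P₁ P₂) p) ≫
        φ.hom.app ((rho₂ P₁ P₂).obj p) := by
  simp only [transitivityCell, Iso.trans_hom, NatTrans.comp_app, Functor.isoWhiskerLeft_hom,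
    Functor.whiskerLeft_app, eqToIso.hom, eqToHom_app]

theorem InvertedBy.transitivityCell (h : InvertedBy q φ) :
    InvertedBy q (transitivityCell φ) := by
  obtain ⟨hq, hφ⟩ := h
  refine (invertedBy_iff q _).2 fun p =>
    ⟨(Functor.congr_obj hq _).trans ((congrArg q.obj p.2).trans (Functor.congr_obj hq _)), ?_⟩
  rw [transitivityCell_hom_app, Functor.map_comp, Functor.map_comp, hφ, hφ, eqToHom_map,
    eqToHom_trans, eqToHom_trans]

theorem IsIsokernelCell.exists_lift (h : IsIsokernelCell q P₁ P₂ φ) {X : Type u} [Category.{u} X]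
    {R₁ R₂ : X ⥤ D} (ψ : R₁ ≅ R₂) (hψ : InvertedBy q ψ) :
    ∃ (L : X ⥤ C) (h₁ : L ⋙ P₁ = R₁) (h₂ : L ⋙ P₂ = R₂), ∀ x, φ.hom.app (L.obj x) =
      eqToHom (congrArg (fun F : X ⥤ D => F.obj x) h₁) ≫ ψ.hom.app x ≫
        eqToHom (congrArg (fun F : X ⥤ D => F.obj x) h₂).symm :=
  (h.2 (Cat.of X) R₁ R₂ ψ hψ).exists

theorem IsIsokernelCell.is2Relation (h : IsIsokernelCell q P₁ P₂ φ) : Is2Relation P₁ P₂ φ := by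
  obtain ⟨hφ, ⟨hinj, -⟩, _, _⟩ := (isIsokernelCell_iff_bijective q P₁ P₂ φ).1 h
  exact ⟨fun c c' hcc' => hinj (ObjectProperty.FullSubcategory.ext hcc'),
    show (isokernelLift q φ hφ ⋙ (IsoInvertedBy q).ι).Full from inferInstance,
    show (isokernelLift q φ hφ ⋙ (IsoInvertedBy q).ι).Faithful from inferInstance⟩

theorem IsIsokernelCell.isReflexive2 (h : IsIsokernelCell q P₁ P₂ φ) : IsReflexive2 P₁ P₂ φ := by
  obtain ⟨r, h₁, h₂, hr⟩ := h.exists_lift (Iso.refl (𝟭 D))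
    ((invertedBy_iff q _).2 fun d => ⟨rfl, q.map_id d⟩)
  exact ⟨r, h₁, h₂, fun d => by simp [hr d]⟩

theorem IsIsokernelCell.isSymmetric2 (h : IsIsokernelCell q P₁ P₂ φ) : IsSymmetric2 P₁ P₂ φ :=
  h.exists_lift φ.symm h.1.symm

theorem IsIsokernelCell.isTransitive2 (h : IsIsokernelCell q P₁ P₂ φ) :
    IsTransitive2 P₁ P₂ φ := by
  obtain ⟨t, h₁, h₂, ht⟩ := h.exists_lift (transitivityCell φ) h.1.transitivityCell
  refine ⟨t, h₁, h₂, fun p => ?_⟩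
  rw [ht, transitivityCell_hom_app]
  simp only [Category.assoc]
  rfl

end IsokernelCell

/-- in `Cat`, an invertible 2-cell `φ : π₁ ⇒ π₂ : C ⟶ D` is an
equivalence 2-relation iff it is an acyclic isokernel cell, i.e. the isokernel cell of
some retract equivalence `q : D ⟶ E`, with the identifier of `φ` equal to the equalizer
of `π₁` and `π₂`. -/
theorem statement14 (P₁ P₂ : C ⥤ D) (φ : P₁ ≅ P₂) :
    IsEquiv2Relation P₁ P₂ φ ↔
      ∃ (E : Cat.{u, u}) (q : D ⥤ ↑E), IsRetractEquiv q ∧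
        IsIsokernelCell q P₁ P₂ φ ∧ IsAcyclic2 P₁ P₂ φ := by
  constructor
  · intro h
    exact ⟨Cat.of h.isThinGroupoid.QuotientCategory, h.isThinGroupoid.quotientFunctor,
      h.isThinGroupoid.isRetractEquiv_quotientFunctor, h.isIsokernelCell, h.2.2.2.2⟩
  · rintro ⟨E, q, -, hq, hacyclic⟩
    exact ⟨hq.is2Relation, hq.isReflexive2, hq.isSymmetric2, hq.isTransitive2, hacyclic⟩

end Statement14

end Paper
end
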